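/- Let d ≥ 1 and h > 0. Let A : ℝ^d → M_d(ℝ) be smooth with A(x) symmetric for every x, let b : ℝ^d → ℝ^d, c : ℝ^d → ℝ, f : ℝ^d → ℝ and ℓ : U → ℝ be smooth, where U ⊆ ℝ^d is open. Assume P_h(e^{−f/h}) = 0 pointwise on U. Define v : U → ℝ by v(x) = ∫_0^{ℓ(x)} exp(−s²/(2h)) ds. Then for every x ∈ U, P_h( v·e^{−f/h} )(x) = [ h( 2⟨A(x)∇ℓ(x), ∇f(x)⟩ + ⟨A(x)∇ℓ(x), ∇ℓ(x)⟩·ℓ(x) + ⟨b(x), ∇ℓ(x)⟩ ) − h² div(A∇ℓ)(x) ] · exp( −( f(x) + ℓ(x)²/2 )/h ). -/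

import Mathlib

open Matrix
open scoped ContDiff

noncomputable section

/-- Partial derivative `∂_i u (x)`. -/
def pd {d : ℕ} (i : Fin d) (u : (Fin d → ℝ) → ℝ) (x : Fin d → ℝ) : ℝ :=
  fderiv ℝ u x (Pi.single i 1)

/-- Gradient `∇u(x)` as a vector. -/
def grad {d : ℕ} (u : (Fin d → ℝ) → ℝ) (x : Fin d → ℝ) : Fin d → ℝ :=
  fun i => pd i u x

/-- Divergence of a vector field. -/
def dvg {d : ℕ} (V : (Fin d → ℝ) → (Fin d → ℝ)) (x : Fin d → ℝ) : ℝ :=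
  ∑ i, fderiv ℝ (fun y => V y i) x (Pi.single i 1)

/-- The Fokker–Planck type operator
`P_h u = −h² div(A∇u) + (h/2)(b·∇u + div(b u)) + c u`. -/
def FPop {d : ℕ} (A : (Fin d → ℝ) → Matrix (Fin d) (Fin d) ℝ)
    (b : (Fin d → ℝ) → (Fin d → ℝ)) (c : (Fin d → ℝ) → ℝ) (h : ℝ)
    (u : (Fin d → ℝ) → ℝ) (x : Fin d → ℝ) : ℝ :=
  -h ^ 2 * dvg (fun y => (A y).mulVec (grad u y)) x
    + (h / 2) * (b x ⬝ᵥ grad u x + dvg (fun y => u y • b y) x)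
    + c x * u x

lemma pd_of_hasFDerivAt {d : ℕ} {u : (Fin d → ℝ) → ℝ} {x : Fin d → ℝ}
    {L : (Fin d → ℝ) →L[ℝ] ℝ} (hL : HasFDerivAt u L x) (i : Fin d) :
    pd i u x = L (Pi.single i 1) := by rw [pd, hL.fderiv]

lemma dvg_congr {d : ℕ} {V₁ V₂ : (Fin d → ℝ) → (Fin d → ℝ)} {x : Fin d → ℝ}
    (hv : V₁ =ᶠ[nhds x] V₂) : dvg V₁ x = dvg V₂ x := by
  unfold dvg
  refine Finset.sum_congr rfl fun i _ => ?_
  have : (fun y => V₁ y i) =ᶠ[nhds x] fun y => V₂ y i :=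
    hv.mono fun y hy => by simp only [hy]
  rw [this.fderiv_eq]

lemma dvg_smul {d : ℕ} {φ : (Fin d → ℝ) → ℝ} {V : (Fin d → ℝ) → Fin d → ℝ}
    {x : Fin d → ℝ}
    (hφ : DifferentiableAt ℝ φ x)
    (hV : ∀ i, DifferentiableAt ℝ (fun y => V y i) x) :
    dvg (fun y => φ y • V y) x = grad φ x ⬝ᵥ V x + φ x * dvg V x := by
  unfold dvg
  have key : ∀ i : Fin d, fderiv ℝ (fun y => (φ y • V y) i) x (Pi.single i 1)
      = pd i φ x * V x i + φ x * fderiv ℝ (fun y => V y i) x (Pi.single i 1) := by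
    intro i
    have h1 : (fun y => (φ y • V y) i) = fun y => φ y * V y i := by
      funext y; simp
    rw [h1, fderiv_fun_mul hφ (hV i)]
    simp [pd]; ring
  simp_rw [key]
  rw [Finset.sum_add_distrib]
  simp [dotProduct, grad, Finset.mul_sum]

lemma dvg_comb {d : ℕ} {φ ψ : (Fin d → ℝ) → ℝ} {V W : (Fin d → ℝ) → Fin d → ℝ}
    {x : Fin d → ℝ}
    (hφ : DifferentiableAt ℝ φ x) (hψ : DifferentiableAt ℝ ψ x)
    (hV : ∀ i, DifferentiableAt ℝ (fun y => V y i) x)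
    (hW : ∀ i, DifferentiableAt ℝ (fun y => W y i) x) :
    dvg (fun y => φ y • V y + ψ y • W y) x
      = grad φ x ⬝ᵥ V x + φ x * dvg V x + (grad ψ x ⬝ᵥ W x + ψ x * dvg W x) := by
  have hadd : dvg (fun y => φ y • V y + ψ y • W y) x
      = dvg (fun y => φ y • V y) x + dvg (fun y => ψ y • W y) x := by
    unfold dvg
    rw [← Finset.sum_add_distrib]
    refine Finset.sum_congr rfl fun i _ => ?_
    have h1 : (fun y => (φ y • V y + ψ y • W y) i)
        = fun y => φ y * V y i + ψ y * W y i := by funext y; simp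
    have h2 : (fun y => (φ y • V y) i) = fun y => φ y * V y i := by funext y; simp
    have h3 : (fun y => (ψ y • W y) i) = fun y => ψ y * W y i := by funext y; simp
    rw [h1, h2, h3, fderiv_fun_add (hφ.fun_mul (hV i)) (hψ.fun_mul (hW i))]
    simp
  rw [hadd, dvg_smul hφ hV, dvg_smul hψ hW]

theorem quasimode_computation
    (d : ℕ) (hd : 1 ≤ d) (h : ℝ) (hh : 0 < h)
    (A : (Fin d → ℝ) → Matrix (Fin d) (Fin d) ℝ)
    (b : (Fin d → ℝ) → (Fin d → ℝ)) (c f : (Fin d → ℝ) → ℝ)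
    (U : Set (Fin d → ℝ)) (hU : IsOpen U)
    (ℓ : (Fin d → ℝ) → ℝ)
    (hA : ∀ i j, ContDiff ℝ ∞ fun x => A x i j)
    (hAsymm : ∀ x, (A x)ᵀ = A x)
    (hb : ∀ i, ContDiff ℝ ∞ fun x => b x i)
    (hc : ContDiff ℝ ∞ c) (hf : ContDiff ℝ ∞ f)
    (hℓ : ContDiffOn ℝ ∞ ℓ U)
    (hP : ∀ x ∈ U, FPop A b c h (fun y => Real.exp (-f y / h)) x = 0) :
    ∀ x ∈ U,
      FPop A b c h
        (fun y => (∫ s in (0 : ℝ)..(ℓ y), Real.exp (-s ^ 2 / (2 * h))) *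
          Real.exp (-f y / h)) x
      = (h * (2 * ((A x).mulVec (grad ℓ x) ⬝ᵥ grad f x)
              + ((A x).mulVec (grad ℓ x) ⬝ᵥ grad ℓ x) * ℓ x
              + b x ⬝ᵥ grad ℓ x)
          - h ^ 2 * dvg (fun y => (A y).mulVec (grad ℓ y)) x)
        * Real.exp (-(f x + ℓ x ^ 2 / 2) / h) := by
  intro x hx
  have hne : (∞ : WithTop ℕ∞) ≠ 0 := by simp
  set w : ℝ → ℝ := fun s => Real.exp (-s ^ 2 / (2 * h)) with hwdef
  set E : (Fin d → ℝ) → ℝ := fun y => Real.exp (-f y / h) with hEdef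
  set v : (Fin d → ℝ) → ℝ := fun y => ∫ s in (0:ℝ)..(ℓ y), Real.exp (-s ^ 2 / (2 * h)) with hvdef
  -- smoothness of w and E
  have hwsm : ContDiff ℝ ∞ w := by
    apply Real.contDiff_exp.comp
    exact (contDiff_id.pow 2).neg.div_const _
  have hEsm : ContDiff ℝ ∞ E := by
    apply Real.contDiff_exp.comp
    exact hf.neg.div_const _
  -- FTC derivative
  have hF : ∀ t : ℝ, HasDerivAt (fun t : ℝ => ∫ s in (0:ℝ)..t, Real.exp (-s ^ 2 / (2 * h)))
      (w t) t := by
    intro t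
    exact intervalIntegral.integral_hasDerivAt_right
      (hwsm.continuous.intervalIntegrable _ _)
      hwsm.continuous.stronglyMeasurable.stronglyMeasurableAtFilter
      hwsm.continuous.continuousAt
  -- derivative of w
  have hw' : ∀ t : ℝ, HasDerivAt w (w t * (-t / h)) t := by
    intro t
    have h1 : HasDerivAt (fun s : ℝ => -s ^ 2 / (2 * h)) (-t / h) t := by
      have h0 : HasDerivAt (fun s : ℝ => -s ^ 2 / (2 * h)) (-((2:ℕ) * t ^ (2 - 1)) / (2 * h)) t := ((hasDerivAt_pow 2 t).neg).div_const (2 * h)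
      convert h0 using 1
      field_simp
      ring
    simpa using h1.exp
  -- differentiability of ℓ on U
  have hℓx : ∀ y ∈ U, ContDiffAt ℝ ∞ ℓ y := fun y hy => hℓ.contDiffAt (hU.mem_nhds hy)
  have hℓd : ∀ y ∈ U, DifferentiableAt ℝ ℓ y := fun y hy => (hℓx y hy).differentiableAt hne
  have hfd : ∀ y, DifferentiableAt ℝ f y := fun y => hf.differentiable hne y
  -- derivative of E
  have hEF : ∀ y, HasFDerivAt E ((-E y / h) • fderiv ℝ f y) y := by
    intro y
    have h1 : HasFDerivAt (fun z => -f z / h) ((-1/h : ℝ) • fderiv ℝ f y) y := by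
      have h0 := (hfd y).hasFDerivAt.const_mul (-1/h : ℝ)
      have e : (fun z => -f z / h) = fun z => -1/h * f z := by funext z; ring
      rw [e]; exact h0
    have h2 := h1.exp
    have h3 : (-E y / h) • fderiv ℝ f y = Real.exp (-f y / h) • ((-1/h : ℝ) • fderiv ℝ f y) := by
      rw [smul_smul]; congr 1; simp [hEdef]; ring
    rw [h3]; exact h2
  -- derivative of v on U
  have hvF : ∀ y ∈ U, HasFDerivAt v (w (ℓ y) • fderiv ℝ ℓ y) y := by
    intro y hy
    exact HasDerivAt.comp_hasFDerivAt y (hF (ℓ y)) (hℓd y hy).hasFDerivAt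
  -- derivative of w ∘ ℓ on U
  have hwℓF : ∀ y ∈ U, HasFDerivAt (fun z => w (ℓ z))
      ((w (ℓ y) * (-ℓ y / h)) • fderiv ℝ ℓ y) y := by
    intro y hy
    exact HasDerivAt.comp_hasFDerivAt y (hw' (ℓ y)) (hℓd y hy).hasFDerivAt
  -- gradient formulas
  have hgE : ∀ y, grad E y = (-E y / h) • grad f y := by
    intro y; funext i
    simp only [grad]
    rw [pd_of_hasFDerivAt (hEF y)]
    simp [pd, grad]
  have hgv : grad v x = w (ℓ x) • grad ℓ x := by
    funext i
    simp only [grad]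
    rw [pd_of_hasFDerivAt (hvF x hx)]
    simp [pd, grad]
  have hgvE : ∀ y ∈ U, grad (fun z => v z * E z) y
      = v y • grad E y + (E y * w (ℓ y)) • grad ℓ y := by
    intro y hy; funext i
    simp only [grad]
    rw [pd_of_hasFDerivAt ((hvF y hy).fun_mul (hEF y))]
    simp [pd, grad, (hEF y).fderiv]
    ring
  have hgψ : grad (fun z => E z * w (ℓ z)) x
      = (E x * (w (ℓ x) * (-ℓ x / h))) • grad ℓ x + (w (ℓ x) * (-E x / h)) • grad f x := by
    funext i
    simp only [grad]
    rw [pd_of_hasFDerivAt ((hEF x).fun_mul (hwℓF x hx))]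
    simp [pd, grad]
    ring
  -- differentiability of components
  have hgEd : ∀ j : Fin d, DifferentiableAt ℝ (fun y => grad E y j) x := by
    intro j
    have h2 : ContDiffAt ℝ 1 (fderiv ℝ E) x :=
      hEsm.contDiffAt.fderiv_right (by exact WithTop.coe_le_coe.mpr le_top)
    exact (h2.differentiableAt one_ne_zero).clm_apply (differentiableAt_const _)
  have hgℓd : ∀ j : Fin d, DifferentiableAt ℝ (fun y => grad ℓ y j) x := by
    intro j
    have h2 : ContDiffAt ℝ 1 (fderiv ℝ ℓ) x :=
      (hℓx x hx).fderiv_right (by exact WithTop.coe_le_coe.mpr le_top)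
    exact (h2.differentiableAt one_ne_zero).clm_apply (differentiableAt_const _)
  have hVEd : ∀ i, DifferentiableAt ℝ (fun y => (A y).mulVec (grad E y) i) x := by
    intro i
    have hrw : (fun y => (A y).mulVec (grad E y) i) = fun y => ∑ j, A y i j * grad E y j := by
      funext y; simp [Matrix.mulVec, dotProduct]
    rw [hrw]
    exact DifferentiableAt.fun_sum fun j _ => ((hA i j).differentiable hne x).mul (hgEd j)
  have hWd : ∀ i, DifferentiableAt ℝ (fun y => (A y).mulVec (grad ℓ y) i) x := by
    intro i
    have hrw : (fun y => (A y).mulVec (grad ℓ y) i) = fun y => ∑ j, A y i j * grad ℓ y j := by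
      funext y; simp [Matrix.mulVec, dotProduct]
    rw [hrw]
    exact DifferentiableAt.fun_sum fun j _ => ((hA i j).differentiable hne x).mul (hgℓd j)
  have hbd : ∀ i, DifferentiableAt ℝ (fun y => b y i) x := fun i => (hb i).differentiable hne x
  have hvd : DifferentiableAt ℝ v x := (hvF x hx).differentiableAt
  have hEd : DifferentiableAt ℝ E x := (hEF x).differentiableAt
  have hψd : DifferentiableAt ℝ (fun z => E z * w (ℓ z)) x :=
    hEd.mul (hwℓF x hx).differentiableAt
  -- main divergence computation
  have hev : (fun y => (A y).mulVec (grad (fun z => v z * E z) y)) =ᶠ[nhds x]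
      (fun y => v y • (A y).mulVec (grad E y) + (E y * w (ℓ y)) • (A y).mulVec (grad ℓ y)) := by
    filter_upwards [hU.mem_nhds hx] with y hy
    rw [hgvE y hy, Matrix.mulVec_add, Matrix.mulVec_smul, Matrix.mulVec_smul]
  have D1 : dvg (fun y => (A y).mulVec (grad (fun z => v z * E z) y)) x
      = grad v x ⬝ᵥ (A x).mulVec (grad E x)
        + v x * dvg (fun y => (A y).mulVec (grad E y)) x
        + (grad (fun z => E z * w (ℓ z)) x ⬝ᵥ (A x).mulVec (grad ℓ x)
          + (E x * w (ℓ x)) * dvg (fun y => (A y).mulVec (grad ℓ y)) x) := by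
    rw [dvg_congr hev]
    exact dvg_comb hvd hψd hVEd hWd
  have D2 : dvg (fun y => (v y * E y) • b y) x
      = grad (fun z => v z * E z) x ⬝ᵥ b x + (v x * E x) * dvg b x := by
    exact dvg_smul (hvd.mul hEd) hbd
  have D3 : dvg (fun y => E y • b y) x
      = grad E x ⬝ᵥ b x + E x * dvg b x := dvg_smul hEd hbd
  -- symmetry of A
  have hsym : ∀ u z : Fin d → ℝ, u ⬝ᵥ (A x).mulVec z = (A x).mulVec u ⬝ᵥ z := by
    intro u z
    rw [Matrix.dotProduct_mulVec, ← Matrix.mulVec_transpose, hAsymm]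
  -- exponential identity
  have hexp : Real.exp (-(f x + ℓ x ^ 2 / 2) / h) = w (ℓ x) * E x := by
    rw [hwdef, hEdef]
    rw [← Real.exp_add]
    congr 1
    field_simp
    ring
  have hPx : FPop A b c h E x = 0 := hP x hx
  -- expand FPop in hPx
  rw [FPop, D3, hgE] at hPx
  simp only [smul_dotProduct, dotProduct_smul, smul_eq_mul] at hPx
  rw [show grad f x ⬝ᵥ b x = b x ⬝ᵥ grad f x from dotProduct_comm _ _] at hPx
  -- expand goal
  show FPop A b c h (fun y => v y * E y) x = _
  rw [FPop, D1, D2, hexp]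
  rw [hgvE x hx, hgv, hgψ, hgE]
  rw [Matrix.mulVec_smul]
  -- expand dot products
  simp only [smul_dotProduct, dotProduct_smul, dotProduct_add,
    add_dotProduct, smul_eq_mul, Pi.add_apply, Pi.smul_apply]
  -- symmetrize
  rw [hsym (grad ℓ x) (grad f x)]
  rw [show grad f x ⬝ᵥ (A x).mulVec (grad ℓ x) = (A x).mulVec (grad ℓ x) ⬝ᵥ grad f x from
    dotProduct_comm _ _]
  rw [show grad ℓ x ⬝ᵥ (A x).mulVec (grad ℓ x) = (A x).mulVec (grad ℓ x) ⬝ᵥ grad ℓ x from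
    dotProduct_comm _ _]
  rw [show grad ℓ x ⬝ᵥ b x = b x ⬝ᵥ grad ℓ x from dotProduct_comm _ _]
  rw [show grad f x ⬝ᵥ b x = b x ⬝ᵥ grad f x from dotProduct_comm _ _]
  field_simp at hPx ⊢
  linear_combination (v x) * hPx


end
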